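/- Let p be an odd prime. For every integer n with 1 ≤ n ≤ p-2, the rational number C_n^{(-(p-2))} - C_n^{(1)} has p-adic valuation at least 1; that is, the integer C_n^{(-(p-2))} is congruent modulo p to the classical Bernoulli number C_n^{(1)} = B_n (with the convention B_1 = -1/2), whose denominator is prime to p for these n. -/

import Mathlib

/-- Stirling numbers of the second kind. -/
def stirling2 : ℕ → ℕ → ℕ
  | 0, 0 => 1
  | 0, _ + 1 => 0
  | _ + 1, 0 => 0
  | n + 1, m + 1 => (m + 1) * stirling2 n (m + 1) + stirling2 n m

/-- The poly-Bernoulli number `B_n^{(-k)}` with negative upper index `-k`. -/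
def polyBernoulliB (k n : ℕ) : ℤ :=
  (-1 : ℤ) ^ n * ∑ m ∈ Finset.range (n + 1),
    (-1 : ℤ) ^ m * (m.factorial : ℤ) * (stirling2 n m : ℤ) * ((m : ℤ) + 1) ^ k

/-- The poly-Bernoulli number of type C, `C_n^{(-k)}`, with negative upper index `-k`. -/
def polyBernoulliC (k n : ℕ) : ℤ :=
  (-1 : ℤ) ^ n * ∑ m ∈ Finset.range (n + 1),
    (-1 : ℤ) ^ m * (m.factorial : ℤ) * (stirling2 (n + 1) (m + 1) : ℤ) * ((m : ℤ) + 1) ^ k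

section AuxLemmas
open Polynomial Finset

lemma stirling2_zero_right (n : ℕ) : stirling2 (n+1) 0 = 0 := rfl

lemma stirling2_eq_zero {n m : ℕ} (h : n < m) : stirling2 n m = 0 := by
  induction n generalizing m with
  | zero => cases m with
    | zero => omega
    | succ m => rfl
  | succ n ih =>
    cases m with
    | zero => omega
    | succ m =>
      show (m + 1) * stirling2 n (m + 1) + stirling2 n m = 0
      rw [ih (by omega), ih (by omega)]
      ring

/-- key polynomial identity -/
lemma key_poly (n : ℕ) : ((X + 1 : ℚ[X]))^n
    = ∑ m ∈ range (n+1), (stirling2 (n+1) (m+1) : ℚ) • descPochhammer ℚ m := by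
  induction n with
  | zero => simp [show stirling2 1 1 = 1 from rfl]
  | succ n ih =>
    have hmul : ∀ m : ℕ, (X + 1 : ℚ[X]) * descPochhammer ℚ m
        = descPochhammer ℚ (m+1) + ((m : ℚ) + 1) • descPochhammer ℚ m := by
      intro m
      rw [descPochhammer_succ_right, smul_eq_C_mul, C_add, C_1, map_natCast]
      ring
    calc ((X + 1 : ℚ[X]))^(n+1)
        = (X + 1) * ∑ m ∈ range (n+1), (stirling2 (n+1) (m+1) : ℚ) • descPochhammer ℚ m := by
          rw [pow_succ, ih]; ring
      _ = ∑ m ∈ range (n+1), ((stirling2 (n+1) (m+1) : ℚ) • descPochhammer ℚ (m+1)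
            + ((m+1) * stirling2 (n+1) (m+1) : ℚ) • descPochhammer ℚ m) := by
          rw [Finset.mul_sum]
          refine Finset.sum_congr rfl fun m _ => ?_
          rw [mul_smul_comm, hmul, smul_add, smul_smul]
          ring
      _ = ∑ m ∈ range (n+2), (stirling2 (n+2) (m+1) : ℚ) • descPochhammer ℚ m := by
          rw [Finset.sum_add_distrib]
          have hrec : ∀ m : ℕ, (stirling2 (n+2) (m+1) : ℚ)
              = ((m+1) * stirling2 (n+1) (m+1) : ℚ) + (stirling2 (n+1) m : ℚ) := by
            intro m
            norm_cast
          have hsplit : ∑ m ∈ range (n+2), (stirling2 (n+2) (m+1) : ℚ) • descPochhammer ℚ m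
              = ∑ m ∈ range (n+2), (((m+1) * stirling2 (n+1) (m+1) : ℚ) • descPochhammer ℚ m
                + (stirling2 (n+1) m : ℚ) • descPochhammer ℚ m) :=
            Finset.sum_congr rfl (fun m _ => by rw [hrec m, add_smul])
          rw [hsplit, Finset.sum_add_distrib, add_comm]
          congr 1
          · conv_rhs => rw [Finset.sum_range_succ]
            rw [stirling2_eq_zero (show n+1 < n+2 by omega)]
            simp
          · rw [Finset.sum_range_succ'
              (fun m => (stirling2 (n+1) m : ℚ) • descPochhammer ℚ m) (n+1),
              stirling2_zero_right]
            simp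

lemma eval_neg_one_dp (m : ℕ) :
    eval (-1 : ℚ) (descPochhammer ℚ m) = (-1)^m * m.factorial := by
  induction m with
  | zero => simp
  | succ m ih =>
    rw [descPochhammer_succ_right]
    simp only [eval_mul, eval_sub, eval_X, eval_natCast, ih]
    push_cast [Nat.factorial_succ]
    ring

lemma coeff_one_dp (m : ℕ) :
    (descPochhammer ℚ (m+1)).coeff 1 = (-1)^m * m.factorial := by
  rw [descPochhammer_succ_left, coeff_X_mul, Polynomial.coeff_zero_eq_eval_zero, eval_comp]
  simpa using eval_neg_one_dp m

lemma telescope (m N : ℕ) : ∑ x ∈ range N, eval (x:ℚ) (descPochhammer ℚ m)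
    = eval (N:ℚ) (descPochhammer ℚ (m+1)) / (m+1) := by
  have hm1 : ((m:ℚ) + 1) ≠ 0 := by positivity
  induction N with
  | zero => simp
  | succ N ih =>
    rw [Finset.sum_range_succ, ih]
    have h1 : eval ((N:ℚ)+1) (descPochhammer ℚ (m+1))
        = ((N:ℚ)+1) * eval (N:ℚ) (descPochhammer ℚ m) := by
      rw [descPochhammer_succ_left]
      simp [eval_comp]
    have h2 : eval (N:ℚ) (descPochhammer ℚ (m+1))
        = eval (N:ℚ) (descPochhammer ℚ m) * ((N:ℚ) - m) := by
      rw [descPochhammer_succ_right]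
      simp
    push_cast
    rw [h1, h2]
    field_simp
    ring

lemma bern_stirling (n : ℕ) (hn : 1 ≤ n) :
    (-1:ℚ)^n * _root_.bernoulli n
      = ∑ m ∈ range (n+1), (-1:ℚ)^m * m.factorial * (stirling2 (n+1) (m+1) : ℚ) / (m+1) := by
  set P : ℚ[X] := ∑ m ∈ range (n+1),
    ((stirling2 (n+1) (m+1) : ℚ)/(m+1)) • descPochhammer ℚ (m+1) with hP
  set Q : ℚ[X] := ∑ i ∈ range (n+1),
    (_root_.bernoulli i * ((n+1).choose i) / (n+1)) • ((X+1):ℚ[X])^(n+1-i) with hQ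
  have heval : ∀ N : ℕ, eval (N:ℚ) P = eval (N:ℚ) Q := by
    intro N
    have hLHS : eval (N:ℚ) P = ∑ x ∈ range N, ((x:ℚ)+1)^n := by
      rw [hP, eval_finset_sum]
      simp only [eval_smul, smul_eq_mul]
      have : ∀ m ∈ range (n+1), (stirling2 (n+1) (m+1) : ℚ)/(m+1)
          * eval (N:ℚ) (descPochhammer ℚ (m+1))
          = ∑ x ∈ range N, (stirling2 (n+1) (m+1) : ℚ) * eval (x:ℚ) (descPochhammer ℚ m) := by
        intro m _
        rw [← Finset.mul_sum, telescope]
        ring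
      rw [Finset.sum_congr rfl this, Finset.sum_comm]
      refine Finset.sum_congr rfl fun x _ => ?_
      have := key_poly n
      have h2 := congrArg (eval ((x:ℚ))) this
      simp only [eval_pow, eval_add, eval_X, eval_one, eval_finset_sum, eval_smul,
        smul_eq_mul] at h2
      rw [← h2]
    have hshift : ∑ x ∈ range N, ((x:ℚ)+1)^n = ∑ k ∈ range (N+1), (k:ℚ)^n := by
      rw [Finset.sum_range_succ' (fun k => (k:ℚ)^n) N]
      have : ((0:ℕ):ℚ)^n = 0 := by
        rw [Nat.cast_zero, zero_pow (by omega)]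
      rw [this, add_zero]
      push_cast
      rfl
    have hRHS : eval (N:ℚ) Q = ∑ i ∈ range (n+1),
        _root_.bernoulli i * ((n+1).choose i) * ((N:ℚ)+1)^(n+1-i) / (n+1) := by
      rw [hQ, eval_finset_sum]
      refine Finset.sum_congr rfl fun i _ => ?_
      simp only [eval_smul, smul_eq_mul, eval_pow, eval_add, eval_X, eval_one]
      ring
    rw [hLHS, hshift, hRHS]
    have := sum_range_pow (N+1) n
    push_cast at this ⊢
    rw [this]
  have hPQ : P = Q := by
    apply Polynomial.eq_of_infinite_eval_eq
    apply Set.infinite_of_injective_forall_mem (f := fun N : ℕ => (N : ℚ))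
      Nat.cast_injective
    intro N
    exact heval N
  have hc := congrArg (fun r : ℚ[X] => r.coeff 1) hPQ
  rw [hP, hQ] at hc
  simp only [Polynomial.finset_sum_coeff, Polynomial.coeff_smul, smul_eq_mul] at hc
  have hcP : ∑ m ∈ range (n+1),
      (stirling2 (n+1) (m+1) : ℚ)/(m+1) * (descPochhammer ℚ (m+1)).coeff 1
      = ∑ m ∈ range (n+1), (-1:ℚ)^m * m.factorial * (stirling2 (n+1) (m+1) : ℚ) / (m+1) := by
    refine Finset.sum_congr rfl fun m _ => ?_
    rw [coeff_one_dp]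
    ring
  have hcQ : ∑ i ∈ range (n+1),
      _root_.bernoulli i * ((n+1).choose i) / (n+1) * (((X+1):ℚ[X])^(n+1-i)).coeff 1
      = (-1:ℚ)^n * _root_.bernoulli n := by
    have hco : ∀ i, (((X+1):ℚ[X])^(n+1-i)).coeff 1 = ((n+1-i : ℕ) : ℚ) := by
      intro i
      rw [Polynomial.coeff_X_add_one_pow, Nat.choose_one_right]
    have hterm : ∀ i ∈ range (n+1),
        _root_.bernoulli i * ((n+1).choose i) / (n+1) * (((X+1):ℚ[X])^(n+1-i)).coeff 1
        = (n.choose i : ℚ) * _root_.bernoulli i := by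
      intro i hi
      rw [Finset.mem_range] at hi
      rw [hco]
      have key : ((n+1).choose i : ℚ) * ((n+1-i : ℕ) : ℚ) = (n.choose i : ℚ) * ((n:ℚ)+1) := by
        have h2 : (n.choose i) * (n + 1) = (n + 1).choose i * (n + 1 - i) :=
          Nat.choose_mul_succ_eq n i
        exact_mod_cast h2.symm
      have hne : ((n:ℚ)+1) ≠ 0 := by positivity
      field_simp
      linear_combination (_root_.bernoulli i) * key
    rw [Finset.sum_congr rfl hterm, Finset.sum_range_succ, _root_.sum_bernoulli n]
    simp only [Nat.choose_self, Nat.cast_one, one_mul]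
    rcases Nat.even_or_odd n with he | ho
    · have hne1 : n ≠ 1 := by rintro rfl; exact (Nat.not_even_one) he
      simp [hne1, Even.neg_one_pow he]
    · rcases eq_or_ne n 1 with rfl | hne1
      · norm_num [_root_.bernoulli_one]
      · have h1 : 1 < n := by omega
        have : _root_.bernoulli n = 0 := by
          rw [bernoulli_eq_bernoulli'_of_ne_one hne1, bernoulli'_eq_zero_of_odd ho h1]
        simp [this, hne1]
  rw [hcP] at hc
  rw [hcQ] at hc
  exact hc.symm

lemma rat_dvd_num_coprime_den (p : ℕ) (hp : p.Prime) (q : ℚ) (A : ℤ) (b : ℕ) (hb : b ≠ 0)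
    (hqb : q * b = (A : ℚ)) (hpA : (p:ℤ) ∣ A) (hpb : ¬ p ∣ b) :
    (p:ℤ) ∣ q.num ∧ Nat.Coprime p q.den := by
  have hden : (q.den : ℚ) ≠ 0 := by exact_mod_cast q.den_nz
  have h1 : q.num * b = A * q.den := by
    have h0 : ((q.num : ℚ) / q.den) * b = A := by rw [Rat.num_div_den]; exact hqb
    rw [div_mul_eq_mul_div, div_eq_iff hden] at h0
    exact_mod_cast h0
  have hpZ : Prime (p : ℤ) := Nat.prime_iff_prime_int.mp hp
  have hpnum : (p:ℤ) ∣ q.num := by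
    have : (p:ℤ) ∣ q.num * b := h1 ▸ hpA.mul_right _
    rcases hpZ.dvd_mul.mp this with h | h
    · exact h
    · exact absurd (Int.ofNat_dvd.mp (by exact_mod_cast h)) hpb
  refine ⟨hpnum, ?_⟩
  have hdvd : q.den ∣ b := by
    have h2 : (q.den : ℤ) ∣ q.num * b := ⟨A, by linarith [h1]⟩
    have h3 : q.den ∣ q.num.natAbs * b := by
      have := Int.natAbs_dvd_natAbs.mpr h2
      simpa [Int.natAbs_mul] using this
    exact (Nat.Coprime.dvd_of_dvd_mul_left q.reduced.symm h3)
  have : ¬ p ∣ q.den := fun h => hpb (h.trans hdvd)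
  exact (Nat.Prime.coprime_iff_not_dvd hp).mpr this

end AuxLemmas

theorem polyBernoulliC_congr_bernoulli (p : ℕ) (hp : p.Prime) (hodd : Odd p)
    (n : ℕ) (hn1 : 1 ≤ n) (hn2 : n ≤ p - 2) :
    (p : ℤ) ∣ ((polyBernoulliC (p - 2) n : ℚ) - bernoulli n).num ∧
    Nat.Coprime p ((polyBernoulliC (p - 2) n : ℚ) - bernoulli n).den := by
  haveI : Fact p.Prime := ⟨hp⟩
  have hp3 : 3 ≤ p := by
    have h2 := hp.two_le
    have hne : p ≠ 2 := by
      rintro rfl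
      exact (by decide : ¬ Odd 2) hodd
    omega
  have hnp : n + 1 < p := by omega
  set q : ℚ := (polyBernoulliC (p - 2) n : ℚ) - _root_.bernoulli n with hqdef
  -- the exact formula for bernoulli n
  have hb : _root_.bernoulli n = (-1:ℚ)^n *
      ∑ m ∈ Finset.range (n+1), (-1:ℚ)^m * m.factorial * (stirling2 (n+1) (m+1) : ℚ) / (m+1) := by
    rw [← bern_stirling n hn1, ← mul_assoc, ← mul_pow]
    norm_num
  have hq : q = ∑ m ∈ Finset.range (n+1), (-1:ℚ)^(n+m) * m.factorial * (stirling2 (n+1) (m+1) : ℚ)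
      * (((m:ℚ)+1)^(p-2) - 1/((m:ℚ)+1)) := by
    rw [hqdef, hb, polyBernoulliC]
    push_cast
    rw [← mul_sub, ← Finset.sum_sub_distrib, Finset.mul_sum]
    refine Finset.sum_congr rfl fun m _ => ?_
    rw [pow_add]
    ring
  set A : ℤ := ∑ m ∈ Finset.range (n+1), (-1:ℤ)^(n+m) * m.factorial * (stirling2 (n+1) (m+1) : ℤ)
      * ((n+1).factorial / (m+1) : ℕ) * (((m:ℤ)+1)^(p-1) - 1) with hAdef
  have hqb : q * ((n+1).factorial : ℚ) = (A : ℚ) := by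
    rw [hq, hAdef, Finset.sum_mul, Int.cast_sum]
    refine Finset.sum_congr rfl fun m hm => ?_
    rw [Finset.mem_range] at hm
    have hd : ((m:ℚ)+1) * (((n+1).factorial / (m+1) : ℕ) : ℚ) = ((n+1).factorial : ℚ) := by
      exact_mod_cast congrArg (fun z : ℕ => (z : ℚ))
        (Nat.mul_div_cancel' (Nat.dvd_factorial (by omega) (by omega)))
    have hm0 : ((m:ℚ)+1) ≠ 0 := by positivity
    have hpow : ((m:ℚ)+1)^(p-2) * ((m:ℚ)+1) = ((m:ℚ)+1)^(p-1) := by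
      rw [← pow_succ]
      congr 1
      omega
    set d : ℚ := (((n+1).factorial / (m+1) : ℕ) : ℚ) with hddef
    have key : (((m:ℚ)+1)^(p-2) - 1/((m:ℚ)+1)) * ((n+1).factorial : ℚ)
        = d * (((m:ℚ)+1)^(p-1) - 1) := by
      rw [← hd]
      field_simp
      linear_combination d * hpow
    simp only [Int.cast_mul, Int.cast_pow, Int.cast_neg, Int.cast_one, Int.cast_sub,
      Int.cast_natCast, Int.cast_add]
    linear_combination ((-1:ℚ)^(n+m) * m.factorial * (stirling2 (n+1) (m+1) : ℚ)) * key
  have hpA : (p:ℤ) ∣ A := by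
    rw [hAdef]
    refine Finset.dvd_sum fun m hm => ?_
    rw [Finset.mem_range] at hm
    refine Dvd.dvd.mul_left ?_ _
    have hne : (((m:ℤ)+1 : ℤ) : ZMod p) ≠ 0 := by
      rw [Ne, ZMod.intCast_zmod_eq_zero_iff_dvd]
      intro h
      have := Int.le_of_dvd (by positivity) h
      omega
    rw [← ZMod.intCast_zmod_eq_zero_iff_dvd]
    push_cast
    rw [ZMod.pow_card_sub_one_eq_one (by exact_mod_cast hne)]
    ring
  have hpb : ¬ p ∣ (n+1).factorial := by
    rw [hp.dvd_factorial]
    omega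
  exact rat_dvd_num_coprime_den p hp q A _ (Nat.factorial_ne_zero _) hqb hpA hpb
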